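/- Let π and π_new be policies in a finite MDP with γ ∈ [0,1) such that E_{a~π_new(s)} Q^π(s,a) ≥ V^π(s) for all s, with strict inequality at some state s₀ that is reachable. Then V^{π_new}(s₀) > V^π(s₀). -/

import Mathlib

/-!
Write `Q'` for the action values of `πnew`. The improvement hypothesis says that `Q^π` is a
subsolution of the Bellman equation of `πnew`, whose solution is `Q'`. At a minimiser of
`Q' - Q^π` the Bellman equations give `min (Q' - Q^π) ≥ γ · min (Q' - Q^π)`, so the minimum is
nonnegative because `γ < 1`. Hence `Q^π ≤ Q'` everywhere, and averaging over `πnew` at `s₀`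
turns the strict improvement of `Q^π` into a strict improvement of the value.
-/

open Finset

theorem le_sum_mul_of_forall_le {ι : Type*} [Fintype ι] {w f : ι → ℝ} {m : ℝ}
    (hw : ∀ i, 0 ≤ w i) (hw1 : ∑ i, w i = 1) (hf : ∀ i, m ≤ f i) :
    m ≤ ∑ i, w i * f i :=
  calc m = ∑ i, w i * m := by rw [← sum_mul, hw1, one_mul]
    _ ≤ ∑ i, w i * f i := sum_le_sum fun i _ => mul_le_mul_of_nonneg_left (hf i) (hw i)

namespace MDP

variable {S A : Type*}

def qOfValue [Fintype S] (P : S → A → S → ℝ) (r : S → A → ℝ) (γ : ℝ) (V : S → ℝ)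
    (s : S) (a : A) : ℝ :=
  r s a + γ * ∑ s', P s a s' * V s'

def valueOfQ [Fintype A] (π : S → A → ℝ) (Q : S → A → ℝ) (s : S) : ℝ :=
  ∑ a, π s a * Q s a

variable {P : S → A → S → ℝ} {r : S → A → ℝ} {γ : ℝ}

theorem qOfValue_sub [Fintype S] (V V' : S → ℝ) (s : S) (a : A) :
    qOfValue P r γ V' s a - qOfValue P r γ V s a = γ * ∑ s', P s a s' * (V' s' - V s') := by
  simp only [qOfValue, mul_sub, sum_sub_distrib]
  ring

theorem qOfValue_mono [Fintype S] (hP : ∀ s a s', 0 ≤ P s a s') (hγ : 0 ≤ γ) {V V' : S → ℝ}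
    (hV : ∀ s, V s ≤ V' s) (s : S) (a : A) :
    qOfValue P r γ V s a ≤ qOfValue P r γ V' s a := by
  have hdiff : 0 ≤ γ * ∑ s', P s a s' * (V' s' - V s') :=
    mul_nonneg hγ (sum_nonneg fun s' _ => mul_nonneg (hP s a s') (sub_nonneg.2 (hV s')))
  linarith [qOfValue_sub (P := P) (r := r) (γ := γ) V V' s a]

theorem valueOfQ_mono [Fintype A] {π : S → A → ℝ} (hπ : ∀ s a, 0 ≤ π s a) {Q Q' : S → A → ℝ}
    (hQ : ∀ s a, Q s a ≤ Q' s a) (s : S) : valueOfQ π Q s ≤ valueOfQ π Q' s :=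
  sum_le_sum fun a _ => mul_le_mul_of_nonneg_left (hQ s a) (hπ s a)

theorem le_of_le_qOfValue_of_eq_qOfValue [Fintype S] [Fintype A]
    (hP : ∀ s a s', 0 ≤ P s a s') (hP1 : ∀ s a, ∑ s', P s a s' = 1)
    (hγ0 : 0 ≤ γ) (hγ1 : γ < 1)
    {π : S → A → ℝ} (hπ : ∀ s a, 0 ≤ π s a) (hπ1 : ∀ s, ∑ a, π s a = 1)
    {Q Q' : S → A → ℝ}
    (hsub : ∀ s a, Q s a ≤ qOfValue P r γ (valueOfQ π Q) s a)
    (hsol : ∀ s a, Q' s a = qOfValue P r γ (valueOfQ π Q') s a) (s : S) (a : A) :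
    Q s a ≤ Q' s a := by
  have : Nonempty (S × A) := ⟨(s, a)⟩
  obtain ⟨⟨s₁, a₁⟩, hmin⟩ := Finite.exists_min fun p : S × A => Q' p.1 p.2 - Q p.1 p.2
  set m := Q' s₁ a₁ - Q s₁ a₁
  have hvalue : ∀ s', m ≤ valueOfQ π Q' s' - valueOfQ π Q s' := fun s' => by
    simpa only [valueOfQ, ← sum_sub_distrib, ← mul_sub] using
      le_sum_mul_of_forall_le (hπ s') (hπ1 s') fun a' => hmin (s', a')
  have hcontract : γ * m ≤ m :=
    calc γ * m ≤ γ * ∑ s', P s₁ a₁ s' * (valueOfQ π Q' s' - valueOfQ π Q s') :=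
          mul_le_mul_of_nonneg_left (le_sum_mul_of_forall_le (hP s₁ a₁) (hP1 s₁ a₁) hvalue) hγ0
      _ = qOfValue P r γ (valueOfQ π Q') s₁ a₁ - qOfValue P r γ (valueOfQ π Q) s₁ a₁ :=
          (qOfValue_sub _ _ _ _).symm
      _ ≤ m := by linarith [hsol s₁ a₁, hsub s₁ a₁]
  have hm : 0 ≤ m := by nlinarith
  linarith [hmin (s, a)]

end MDP

open MDP in
theorem strict_policy_improvement_general
    {S A : Type*} [Fintype S] [Fintype A]
    (P : S → A → S → ℝ) (hPpos : ∀ s a s', 0 ≤ P s a s')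
    (hPsum : ∀ s a, ∑ s', P s a s' = 1)
    (r : S → A → ℝ) (γ : ℝ) (hγ0 : 0 ≤ γ) (hγ1 : γ < 1)
    (π πnew : S → A → ℝ)
    (hπnpos : ∀ s a, 0 ≤ πnew s a) (hπnsum : ∀ s, ∑ a, πnew s a = 1)
    (Qπ Qnew : S → A → ℝ)
    (hBellπ : ∀ s a, Qπ s a =
      r s a + γ * ∑ s', P s a s' * ∑ a', π s' a' * Qπ s' a')
    (hBellnew : ∀ s a, Qnew s a =
      r s a + γ * ∑ s', P s a s' * ∑ a', πnew s' a' * Qnew s' a')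
    (himprove : ∀ s, (∑ a, π s a * Qπ s a) ≤ ∑ a, πnew s a * Qπ s a)
    (s₀ : S)
    (hstrict : (∑ a, π s₀ a * Qπ s₀ a) < ∑ a, πnew s₀ a * Qπ s₀ a) :
    (∑ a, π s₀ a * Qπ s₀ a) < ∑ a, πnew s₀ a * Qnew s₀ a := by
  have hsub : ∀ s a, Qπ s a ≤ qOfValue P r γ (valueOfQ πnew Qπ) s a := fun s a =>
    (hBellπ s a).trans_le (qOfValue_mono hPpos hγ0 himprove s a)
  have hQ : ∀ s a, Qπ s a ≤ Qnew s a :=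
    le_of_le_qOfValue_of_eq_qOfValue hPpos hPsum hγ0 hγ1 hπnpos hπnsum hsub hBellnew
  exact hstrict.trans_le (valueOfQ_mono hπnpos hQ s₀)

/-- Strict policy improvement at a state where the improvement is strict. -/
theorem strict_policy_improvement
    {S A : Type*} [Fintype S] [Fintype A] [Nonempty S] [Nonempty A]
    (P : S → A → S → ℝ) (hPpos : ∀ s a s', 0 ≤ P s a s')
    (hPsum : ∀ s a, ∑ s', P s a s' = 1)
    (r : S → A → ℝ) (γ : ℝ) (hγ0 : 0 ≤ γ) (hγ1 : γ < 1)
    (π πnew : S → A → ℝ)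
    (hπpos : ∀ s a, 0 ≤ π s a) (hπsum : ∀ s, ∑ a, π s a = 1)
    (hπnpos : ∀ s a, 0 ≤ πnew s a) (hπnsum : ∀ s, ∑ a, πnew s a = 1)
    (Qπ Qnew : S → A → ℝ)
    (hBellπ : ∀ s a, Qπ s a =
      r s a + γ * ∑ s', P s a s' * ∑ a', π s' a' * Qπ s' a')
    (hBellnew : ∀ s a, Qnew s a =
      r s a + γ * ∑ s', P s a s' * ∑ a', πnew s' a' * Qnew s' a')
    (himprove : ∀ s, (∑ a, π s a * Qπ s a) ≤ ∑ a, πnew s a * Qπ s a)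
    (s₀ : S)
    (hstrict : (∑ a, π s₀ a * Qπ s₀ a) < ∑ a, πnew s₀ a * Qπ s₀ a) :
    (∑ a, π s₀ a * Qπ s₀ a) < ∑ a, πnew s₀ a * Qnew s₀ a :=
  strict_policy_improvement_general P hPpos hPsum r γ hγ0 hγ1 π πnew hπnpos hπnsum Qπ Qnew hBellπ
    hBellnew himprove s₀ hstrict
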